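/- With the notation of the previous statement, the rescaled family T_α = α! · S_α is multiplicative for convolution: T_α * T_β = T_{α+β} for all α, β ∈ ℕ^{(I)}. -/

import Mathlib

open TensorProduct

/-- The PBW monomial `B^α`: the product `b_{i₁}^{α(i₁)} ⋯ b_{i_k}^{α(i_k)}`
taken in decreasing order of indices, inside the universal enveloping algebra. -/
noncomputable def pbwMonomial {k : Type*} [Field k] {I : Type*} [LinearOrder I]
    {g : Type*} [LieRing g] [LieAlgebra k g] (B : Module.Basis I k g) (α : I →₀ ℕ) :
    UniversalEnvelopingAlgebra k g :=
  (((α.support.sort (· ≤ ·)).reverse).map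
    (fun i => (UniversalEnvelopingAlgebra.ι k (B i) :
      UniversalEnvelopingAlgebra k g) ^ (α i))).prod

/-- Convolution of two linear forms on `U(g)`, dual to the coproduct `Δ`. -/
noncomputable def convForm {k : Type*} [Field k] {g : Type*} [LieRing g]
    [LieAlgebra k g]
    (Δ : UniversalEnvelopingAlgebra k g →ₐ[k]
      (UniversalEnvelopingAlgebra k g ⊗[k] UniversalEnvelopingAlgebra k g))
    (f h : UniversalEnvelopingAlgebra k g →ₗ[k] k) :
    UniversalEnvelopingAlgebra k g →ₗ[k] k :=
  (TensorProduct.lid k k).toLinearMap ∘ₗ TensorProduct.map f h ∘ₗ Δ.toLinearMap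

/-- `α! = Π_i α(i)!` for a multiindex `α`. -/
def mfact {I : Type*} (α : I →₀ ℕ) : ℕ := α.prod fun _ n => n.factorial

/-! In characteristic zero, rescale the PBW basis to the divided powers `B^γ / γ!`. Each `b_i` is
primitive, so `Δ(b_i^n / n!) = ∑_{p+q=n} b_i^p/p! ⊗ b_i^q/q!`; since `Δ` is multiplicative and the
factors of `B^γ` come in a fixed order, `Δ(B^γ/γ!) = ∑_{δ+ε=γ} B^δ/δ! ⊗ B^ε/ε!`. The forms `T_α`
are the dual family of the divided powers, so `(T_α * T_β)(B^γ/γ!)` is `1` if `γ = α + β` and `0`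
otherwise, which is `T_{α+β}(B^γ/γ!)`. -/

theorem Finset.reverse_sort_le_eq_sort_ge {α : Type*} [LinearOrder α] (s : Finset α) :
    (s.sort (· ≤ ·)).reverse = s.sort (· ≥ ·) :=
  List.Perm.eq_of_sortedGE (s.sortedLT_sort.sortedLE.reverse) (s.sortedGT_sort.sortedGE)
    ((List.reverse_perm _).trans ((s.sort_perm_toList _).trans (s.sort_perm_toList _).symm))

open Finset in
theorem Finsupp.sum_antidiagonal_single_add {α M : Type*} [DecidableEq α] [AddCommMonoid M]
    {a : α} {f : α →₀ ℕ} (ha : f a = 0) (n : ℕ) (F : (α →₀ ℕ) × (α →₀ ℕ) → M) :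
    ∑ p ∈ antidiagonal (single a n + f), F p =
      ∑ i ∈ antidiagonal n, ∑ q ∈ antidiagonal f,
        F (single a i.1 + q.1, single a i.2 + q.2) := by
  rw [← Finset.sum_product']
  symm
  refine Finset.sum_nbij' (fun r => (single a r.1.1 + r.2.1, single a r.1.2 + r.2.2))
    (fun p => ((p.1 a, p.2 a), (p.1.erase a, p.2.erase a))) ?_ ?_ ?_ ?_ (fun _ _ => rfl)
  · rintro ⟨⟨i, j⟩, q₁, q₂⟩ h
    simp only [Finset.mem_product, HasAntidiagonal.mem_antidiagonal] at h ⊢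
    rw [← h.1, ← h.2, single_add]
    abel
  · rintro ⟨p₁, p₂⟩ h
    simp only [Finset.mem_product, HasAntidiagonal.mem_antidiagonal] at h ⊢
    refine ⟨by simpa [ha] using DFunLike.congr_fun h a, ?_⟩
    rw [← erase_add, h, erase_add, erase_single, zero_add, erase_of_notMem_support]
    simpa using ha
  · rintro ⟨⟨i, j⟩, q₁, q₂⟩ h
    simp only [Finset.mem_product, HasAntidiagonal.mem_antidiagonal] at h
    obtain ⟨h₁, h₂⟩ : q₁ a = 0 ∧ q₂ a = 0 := by simpa [ha] using DFunLike.congr_fun h.2 a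
    simp [h₁, h₂, erase_add, erase_of_notMem_support]
  · rintro ⟨p₁, p₂⟩ -
    simp [single_add_erase]

theorem mfact_single_add {I : Type*} {a : I} {f : I →₀ ℕ} (ha : f a = 0) (n : ℕ) :
    mfact (Finsupp.single a n + f) = n.factorial * mfact f := by
  classical
  have hdisj : Disjoint (Finsupp.single a n).support f.support :=
    Finset.disjoint_of_subset_left Finsupp.support_single_subset
      (by simpa [Finsupp.mem_support_iff] using ha)
  rw [mfact, Finsupp.prod_add_index_of_disjoint hdisj, Finsupp.prod_single_index rfl]
  rfl

theorem mfact_ne_zero {I : Type*} (α : I →₀ ℕ) : mfact α ≠ 0 :=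
  Finset.prod_ne_zero_iff.mpr fun i _ => Nat.factorial_ne_zero (α i)

open Finset in
theorem Commute.inv_factorial_smul_add_pow {K A : Type*} [Field K] [CharZero K] [Semiring A]
    [Algebra K A] {x y : A} (h : Commute x y) (n : ℕ) :
    (n.factorial : K)⁻¹ • (x + y) ^ n = ∑ p ∈ antidiagonal n,
      ((p.1.factorial : K)⁻¹ • x ^ p.1) * ((p.2.factorial : K)⁻¹ • y ^ p.2) := by
  rw [h.add_pow', Finset.smul_sum]
  refine Finset.sum_congr rfl fun p hp => ?_
  rw [HasAntidiagonal.mem_antidiagonal] at hp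
  subst hp
  rw [smul_mul_smul, ← Nat.cast_smul_eq_nsmul K, smul_smul, Nat.cast_add_choose]
  congr 1
  rw [mul_div_assoc', inv_mul_cancel₀ (Nat.cast_ne_zero.mpr (Nat.factorial_ne_zero _)), one_div,
    mul_inv]

open Finset in
theorem AlgHom.map_inv_factorial_smul_pow_of_primitive {K A : Type*} [Field K] [CharZero K]
    [Semiring A] [Algebra K A] (Δ : A →ₐ[K] A ⊗[K] A) {x : A}
    (hx : Δ x = x ⊗ₜ[K] 1 + 1 ⊗ₜ[K] x) (n : ℕ) :
    Δ ((n.factorial : K)⁻¹ • x ^ n) = ∑ p ∈ antidiagonal n,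
      ((p.1.factorial : K)⁻¹ • x ^ p.1) ⊗ₜ[K] ((p.2.factorial : K)⁻¹ • x ^ p.2) := by
  have hcomm : Commute (x ⊗ₜ[K] (1 : A)) (1 ⊗ₜ[K] x) := by
    simp [Commute, SemiconjBy, Algebra.TensorProduct.tmul_mul_tmul]
  rw [map_smul, map_pow, hx, hcomm.inv_factorial_smul_add_pow]
  refine Finset.sum_congr rfl fun p _ => ?_
  rw [Algebra.TensorProduct.tmul_pow, Algebra.TensorProduct.tmul_pow, one_pow, one_pow,
    smul_mul_smul, Algebra.TensorProduct.tmul_mul_tmul, mul_one, one_mul,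
    TensorProduct.smul_tmul_smul]

section PBW

variable {k : Type*} [Field k] {I : Type*} [LinearOrder I] {g : Type*} [LieRing g]
  [LieAlgebra k g] (B : Module.Basis I k g)

local notation "U" => UniversalEnvelopingAlgebra k g

local notation "ι" => UniversalEnvelopingAlgebra.ι k

theorem pbwMonomial_zero : pbwMonomial B 0 = 1 := by simp [pbwMonomial]

theorem pbwMonomial_single_add {a : I} {f : I →₀ ℕ} (ha : ∀ c ∈ f.support, c < a) (n : ℕ) :
    pbwMonomial B (Finsupp.single a n + f) = (ι (B a) : U) ^ n * pbwMonomial B f := by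
  rcases eq_or_ne n 0 with rfl | hn
  · simp
  have haf : a ∉ f.support := fun h => lt_irrefl a (ha a h)
  have hfa : f a = 0 := Finsupp.notMem_support_iff.mp haf
  rw [pbwMonomial, pbwMonomial, Finsupp.support_single_add haf hn,
    Finset.reverse_sort_le_eq_sort_ge, Finset.reverse_sort_le_eq_sort_ge,
    Finset.sort_cons _ (fun c hc => (ha c hc).le), List.map_cons, List.prod_cons]
  congr 2
  · simp [hfa]
  · refine List.map_congr_left fun c hc => ?_
    have hca : a ≠ c := (ha c ((f.support.mem_sort _).mp hc)).ne'
    simp [hca]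

noncomputable def dividedPbwMonomial (α : I →₀ ℕ) : U :=
  (mfact α : k)⁻¹ • pbwMonomial B α

theorem dividedPbwMonomial_single_add {a : I} {f : I →₀ ℕ} (ha : ∀ c ∈ f.support, c < a)
    (n : ℕ) : dividedPbwMonomial B (Finsupp.single a n + f) =
      ((n.factorial : k)⁻¹ • (ι (B a) : U) ^ n) * dividedPbwMonomial B f := by
  have hfa : f a = 0 := Finsupp.notMem_support_iff.mp fun h => lt_irrefl a (ha a h)
  rw [dividedPbwMonomial, dividedPbwMonomial, pbwMonomial_single_add B ha, mfact_single_add hfa,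
    smul_mul_smul, Nat.cast_mul, mul_inv]

open Finset in
theorem coproduct_dividedPbwMonomial [CharZero k] (Δ : U →ₐ[k] U ⊗[k] U)
    (hΔ : ∀ x : g, Δ (ι x) = (ι x : U) ⊗ₜ[k] 1 + 1 ⊗ₜ[k] (ι x : U)) (γ : I →₀ ℕ) :
    Δ (dividedPbwMonomial B γ) = ∑ p ∈ antidiagonal γ,
      dividedPbwMonomial B p.1 ⊗ₜ[k] dividedPbwMonomial B p.2 := by
  induction γ using Finsupp.induction_on_max with
  | zero =>
    simp [dividedPbwMonomial, pbwMonomial_zero, mfact, Algebra.TensorProduct.one_def]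
  | single_add a n f ha _ ih =>
    have hfa : f a = 0 := Finsupp.notMem_support_iff.mp fun h => lt_irrefl a (ha a h)
    rw [dividedPbwMonomial_single_add B ha, map_mul,
      AlgHom.map_inv_factorial_smul_pow_of_primitive Δ (hΔ _), ih, sum_mul_sum,
      Finsupp.sum_antidiagonal_single_add hfa]
    refine sum_congr rfl fun i _ => sum_congr rfl fun q hq => ?_
    rw [HasAntidiagonal.mem_antidiagonal] at hq
    have hq₁ : ∀ c ∈ q.1.support, c < a :=
      fun c hc => ha c (Finsupp.support_mono (hq ▸ le_self_add) hc)
    have hq₂ : ∀ c ∈ q.2.support, c < a :=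
      fun c hc => ha c (Finsupp.support_mono (hq ▸ le_add_self) hc)
    rw [Algebra.TensorProduct.tmul_mul_tmul, dividedPbwMonomial_single_add B hq₁,
      dividedPbwMonomial_single_add B hq₂]

end PBW

theorem convForm_apply_of_eq_sum {k : Type*} [Field k] {g : Type*} [LieRing g] [LieAlgebra k g]
    {Δ : UniversalEnvelopingAlgebra k g →ₐ[k]
      (UniversalEnvelopingAlgebra k g ⊗[k] UniversalEnvelopingAlgebra k g)}
    {u : UniversalEnvelopingAlgebra k g} {ι : Type*} {s : Finset ι}
    {x y : ι → UniversalEnvelopingAlgebra k g} (hu : Δ u = ∑ i ∈ s, x i ⊗ₜ[k] y i)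
    (f h : UniversalEnvelopingAlgebra k g →ₗ[k] k) :
    convForm Δ f h u = ∑ i ∈ s, f (x i) * h (y i) := by
  simp [convForm, hu]

theorem smul_coord_dividedPbwMonomial {k : Type*} [Field k] [CharZero k] {I : Type*}
    [LinearOrder I] {g : Type*} [LieRing g] [LieAlgebra k g] {B : Module.Basis I k g}
    {C : Module.Basis (I →₀ ℕ) k (UniversalEnvelopingAlgebra k g)}
    (hC : ∀ α, C α = pbwMonomial B α) (α γ : I →₀ ℕ) :
    ((mfact α : k) • C.coord α) (dividedPbwMonomial B γ) = if α = γ then 1 else 0 := by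
  rw [dividedPbwMonomial, ← hC]
  split_ifs with h
  · subst h
    simp [mfact_ne_zero]
  · simp [Ne.symm h]

/-- The rescaled dual family `T_α = α! · S_α` of a PBW basis is multiplicative
for convolution: `T_α * T_β = T_{α+β}`. -/
theorem rescaled_dual_pbw_multiplicative {k : Type*} [Field k] [CharZero k]
    {I : Type*} [LinearOrder I] {g : Type*} [LieRing g] [LieAlgebra k g]
    (B : Module.Basis I k g)
    (C : Module.Basis (I →₀ ℕ) k (UniversalEnvelopingAlgebra k g))
    (hC : ∀ α, C α = pbwMonomial B α)
    (Δ : UniversalEnvelopingAlgebra k g →ₐ[k]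
      (UniversalEnvelopingAlgebra k g ⊗[k] UniversalEnvelopingAlgebra k g))
    (hΔ : ∀ x : g, Δ (UniversalEnvelopingAlgebra.ι k x) =
      (UniversalEnvelopingAlgebra.ι k x : UniversalEnvelopingAlgebra k g) ⊗ₜ[k] 1 +
        1 ⊗ₜ[k] (UniversalEnvelopingAlgebra.ι k x : UniversalEnvelopingAlgebra k g))
    (T : (I →₀ ℕ) → (UniversalEnvelopingAlgebra k g →ₗ[k] k))
    (hT : ∀ α, T α = (mfact α : k) • C.coord α)
    (α β : I →₀ ℕ) :
    convForm Δ (T α) (T β) = T (α + β) := by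
  refine C.ext fun γ => ?_
  have hCγ : C γ = (mfact γ : k) • dividedPbwMonomial B γ := by
    rw [dividedPbwMonomial, smul_inv_smul₀ (Nat.cast_ne_zero.mpr (mfact_ne_zero γ)), hC]
  rw [hCγ, map_smul, map_smul]
  congr 1
  rw [convForm_apply_of_eq_sum (coproduct_dividedPbwMonomial B Δ hΔ γ), hT, hT, hT]
  simp only [smul_coord_dividedPbwMonomial hC, ite_zero_mul_ite_zero, mul_one]
  simp_rw [show ∀ p : (I →₀ ℕ) × (I →₀ ℕ), (α = p.1 ∧ β = p.2) ↔ (α, β) = p from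
    fun p => by rw [Prod.ext_iff]]
  simp only [Finset.sum_ite_eq, Finset.HasAntidiagonal.mem_antidiagonal]
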